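/- arXiv:1002.2813 — 2 statements merged into one kernel-verified Lean document; each statement's English description precedes it below -/
import Mathlib

section
/- Let R ⊆ ℝ^n be finite with 0 ∈ R and c_i e_i ∈ R for each coordinate i, where c_i > 0. Then for every v ∈ ℝ^n the covariance matrix E_{π_v}[r rᵀ] - E_{π_v}[r]E_{π_v}[r]ᵀ under the Gibbs distribution π_v is positive definite; equivalently, the function F(v) = λ·v - log∑_{r∈R} exp(r·v) is strictly concave. -/
private lemma aux_const {n : ℕ} {R : Finset (Fin n → ℝ)} {c : Fin n → ℝ} (hc : ∀ i, 0 < c i)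
    (h0 : (0 : Fin n → ℝ) ∈ R)
    (hei : ∀ i, (fun j => if j = i then c i else 0 : Fin n → ℝ) ∈ R)
    {η : Fin n → ℝ} {k : ℝ}
    (h : ∀ r ∈ R, ∑ i, η i * r i = k) : η = 0 := by
  have hk : k = 0 := by simpa using (h 0 h0).symm
  funext i
  have h2 := h _ (hei i)
  simp [hk, Finset.mul_sum, mul_ite] at h2
  rcases h2 with h2 | h2
  · exact h2
  · exact absurd h2 (hc i).ne'

/-- If 0 ∈ R and cᵢeᵢ ∈ R with cᵢ > 0, the covariance of r under π_v is positive definite,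
and F(v) = λ·v − log Z(v) is strictly concave. -/
theorem covariance_pos_def {n : ℕ} (R : Finset (Fin n → ℝ)) (c : Fin n → ℝ)
    (hc : ∀ i, 0 < c i)
    (h0 : (0 : Fin n → ℝ) ∈ R)
    (hei : ∀ i, (fun j => if j = i then c i else 0 : Fin n → ℝ) ∈ R)
    (lam : Fin n → ℝ) :
    (∀ v η : Fin n → ℝ, η ≠ 0 →
      0 < ∑ r ∈ R,
        (Real.exp (∑ j, r j * v j) / ∑ r' ∈ R, Real.exp (∑ j, r' j * v j)) *
          (∑ i, η i * (r i - ∑ r'' ∈ R,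
            (Real.exp (∑ j, r'' j * v j) / ∑ r' ∈ R, Real.exp (∑ j, r' j * v j)) * r'' i)) ^ 2)
    ∧ StrictConcaveOn ℝ Set.univ
        (fun v : Fin n → ℝ =>
          (∑ i, lam i * v i) - Real.log (∑ r ∈ R, Real.exp (∑ i, r i * v i))) := by
  constructor
  · intro v η hη
    set Z : ℝ := ∑ r' ∈ R, Real.exp (∑ j, r' j * v j) with hZdef
    have hZ : 0 < Z := Finset.sum_pos (fun r _ => Real.exp_pos _) ⟨0, h0⟩
    set m : Fin n → ℝ := fun i => ∑ r'' ∈ R,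
        (Real.exp (∑ j, r'' j * v j) / Z) * r'' i with hmdef
    -- key: not all η·r equal to η·m
    have hnotall : ¬ ∀ r ∈ R, ∑ i, η i * r i = ∑ i, η i * m i := fun h =>
      hη (aux_const hc h0 hei h)
    push_neg at hnotall
    obtain ⟨r₀, hr₀, hne⟩ := hnotall
    have hsplit : ∀ r : Fin n → ℝ, (∑ i, η i * (r i - m i)) =
        (∑ i, η i * r i) - ∑ i, η i * m i := by
      intro r
      simp [mul_sub, Finset.sum_sub_distrib]
    apply Finset.sum_pos'
    · intro r _
      positivity
    · refine ⟨r₀, hr₀, ?_⟩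
      have h1 : 0 < Real.exp (∑ j, r₀ j * v j) / Z := div_pos (Real.exp_pos _) hZ
      have h2 : (∑ i, η i * (r₀ i - m i)) ≠ 0 := by
        rw [hsplit]
        exact sub_ne_zero.mpr hne
      positivity
  · have hZpos : ∀ v : Fin n → ℝ, 0 < ∑ r ∈ R, Real.exp (∑ i, r i * v i) :=
      fun v => Finset.sum_pos (fun r _ => Real.exp_pos _) ⟨0, h0⟩
    refine ⟨convex_univ, fun x _ y _ hxy a b ha hb hab => ?_⟩
    simp only [smul_eq_mul]
    set Zx : ℝ := ∑ r ∈ R, Real.exp (∑ i, r i * x i) with hZx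
    set Zy : ℝ := ∑ r ∈ R, Real.exp (∑ i, r i * y i) with hZy
    set Lx : ℝ := Real.log Zx
    set Ly : ℝ := Real.log Zy
    -- the mixed point
    have hpt : ∀ r : Fin n → ℝ, ∑ i, r i * (a • x + b • y) i
        = a * (∑ i, r i * x i) + b * (∑ i, r i * y i) := by
      intro r
      rw [Finset.mul_sum, Finset.mul_sum, ← Finset.sum_add_distrib]
      refine Finset.sum_congr rfl fun i _ => ?_
      simp only [Pi.add_apply, Pi.smul_apply, smul_eq_mul]
      ring
    -- linear part
    have hlin : ∑ i, lam i * (a • x + b • y) i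
        = a * (∑ i, lam i * x i) + b * (∑ i, lam i * y i) := by
      rw [Finset.mul_sum, Finset.mul_sum, ← Finset.sum_add_distrib]
      refine Finset.sum_congr rfl fun i _ => ?_
      simp only [Pi.add_apply, Pi.smul_apply, smul_eq_mul]
      ring
    -- not all r·(x-y) constant
    have hη : x - y ≠ 0 := sub_ne_zero.mpr hxy
    have hnotall : ¬ ∀ r ∈ R, ∑ i, (x - y) i * r i = Lx - Ly := by
      intro h
      apply hη
      apply aux_const hc h0 hei (k := Lx - Ly)
      intro r hr
      simpa [mul_comm] using h r hr
    push_neg at hnotall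
    obtain ⟨r₀, hr₀, hner₀⟩ := hnotall
    -- strict convexity of exp gives the per-term bounds
    have hterm : ∀ r ∈ R,
        Real.exp (a * ((∑ i, r i * x i) - Lx) + b * ((∑ i, r i * y i) - Ly))
          ≤ a * Real.exp ((∑ i, r i * x i) - Lx) + b * Real.exp ((∑ i, r i * y i) - Ly) := by
      intro r _
      have := convexOn_exp.2 (Set.mem_univ ((∑ i, r i * x i) - Lx))
        (Set.mem_univ ((∑ i, r i * y i) - Ly)) ha.le hb.le hab
      simpa using this
    have htermstrict :
        Real.exp (a * ((∑ i, r₀ i * x i) - Lx) + b * ((∑ i, r₀ i * y i) - Ly))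
          < a * Real.exp ((∑ i, r₀ i * x i) - Lx) + b * Real.exp ((∑ i, r₀ i * y i) - Ly) := by
      have hne : (∑ i, r₀ i * x i) - Lx ≠ (∑ i, r₀ i * y i) - Ly := by
        intro h
        apply hner₀
        have : (∑ i, r₀ i * x i) - (∑ i, r₀ i * y i) = Lx - Ly := by linarith
        rw [← this, ← Finset.sum_sub_distrib]
        refine Finset.sum_congr rfl fun i _ => ?_
        simp only [Pi.sub_apply]
        ring
      have := strictConvexOn_exp.2 (Set.mem_univ ((∑ i, r₀ i * x i) - Lx))
        (Set.mem_univ ((∑ i, r₀ i * y i) - Ly)) hne ha hb hab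
      simpa using this
    -- normalized sums equal 1
    have hnormx : ∑ r ∈ R, Real.exp ((∑ i, r i * x i) - Lx) = 1 := by
      simp only [Real.exp_sub]
      rw [← Finset.sum_div, ← hZx, Real.exp_log (hZpos x)]
      exact div_self (hZpos x).ne'
    have hnormy : ∑ r ∈ R, Real.exp ((∑ i, r i * y i) - Ly) = 1 := by
      simp only [Real.exp_sub]
      rw [← Finset.sum_div, ← hZy, Real.exp_log (hZpos y)]
      exact div_self (hZpos y).ne'
    -- the key sum bound
    have hsum : ∑ r ∈ R, Real.exp (a * ((∑ i, r i * x i) - Lx) + b * ((∑ i, r i * y i) - Ly)) < 1 := by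
      calc ∑ r ∈ R, Real.exp (a * ((∑ i, r i * x i) - Lx) + b * ((∑ i, r i * y i) - Ly))
          < ∑ r ∈ R, (a * Real.exp ((∑ i, r i * x i) - Lx) + b * Real.exp ((∑ i, r i * y i) - Ly)) := by
            exact Finset.sum_lt_sum hterm ⟨r₀, hr₀, htermstrict⟩
        _ = 1 := by
            rw [Finset.sum_add_distrib, ← Finset.mul_sum, ← Finset.mul_sum, hnormx, hnormy]
            simpa using hab
    -- identify Zm
    have hZm : ∑ r ∈ R, Real.exp (∑ i, r i * (a • x + b • y) i)
        = (∑ r ∈ R, Real.exp (a * ((∑ i, r i * x i) - Lx) + b * ((∑ i, r i * y i) - Ly)))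
          * Real.exp (a * Lx + b * Ly) := by
      rw [Finset.sum_mul]
      refine Finset.sum_congr rfl fun r _ => ?_
      rw [hpt r, ← Real.exp_add]
      ring_nf
    have hZmlt : ∑ r ∈ R, Real.exp (∑ i, r i * (a • x + b • y) i) < Real.exp (a * Lx + b * Ly) := by
      rw [hZm]
      nlinarith [Real.exp_pos (a * Lx + b * Ly)]
    have hlog : Real.log (∑ r ∈ R, Real.exp (∑ i, r i * (a • x + b • y) i)) < a * Lx + b * Ly := by
      have := Real.log_lt_log (hZpos (a • x + b • y)) hZmlt
      rwa [Real.log_exp] at this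
    rw [hlin]
    have : a * Lx + b * Ly = a * Real.log Zx + b * Real.log Zy := rfl
    linarith
end

section
/- Let F : ℝ^n → ℝ be concave and differentiable with global maximizer v*, and define G(v) = F(v) − ‖v − v*‖₂². Suppose ‖∂F/∂v_i‖ ≤ K̄ everywhere, ‖v*‖_∞ ≤ D − K̄, v ∈ [−D,D]^n, and Δv ∈ [−1,1]^n. Then G([v+Δv]_D) ≥ G(v+Δv), where [·]_D denotes coordinate-wise projection onto [−D,D]. -/
lemma concave_fderiv_le {n : ℕ} {F : (Fin n → ℝ) → ℝ}
    (hconc : ConcaveOn ℝ Set.univ F) (hdiff : Differentiable ℝ F)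
    (x y : Fin n → ℝ) : fderiv ℝ F y (y - x) ≤ F y - F x := by
  set d := y - x with hd
  have hline : ∀ t : ℝ, HasDerivAt (fun t : ℝ => F (x + t • d)) (fderiv ℝ F (x + t • d) d) t := by
    intro t
    have h1 : HasDerivAt (fun t : ℝ => x + t • d) d t := by
      simpa using ((hasDerivAt_id t).smul_const d).const_add x
    exact (hdiff (x + t • d)).hasFDerivAt.comp_hasDerivAt t h1
  have hφ : ConcaveOn ℝ Set.univ (fun t : ℝ => F (x + t • d)) := by
    have h := hconc.comp_affineMap (AffineMap.lineMap x y : ℝ →ᵃ[ℝ] (Fin n → ℝ))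
    have heq : (fun t : ℝ => F (x + t • d)) = F ∘ (AffineMap.lineMap x y : ℝ →ᵃ[ℝ] (Fin n → ℝ)) := by
      funext t
      simp only [Function.comp_apply, AffineMap.lineMap_apply_module]
      congr 1
      rw [hd]
      module
    rw [heq]
    simpa using h
  have h01 : (0:ℝ) < 1 := one_pos
  have hsl := hφ.le_slope_of_hasDerivAt (Set.mem_univ (0:ℝ)) (Set.mem_univ (1:ℝ)) h01 (hline 1)
  have hx1 : x + (1:ℝ) • d = y := by simp [hd]
  have hx0 : x + (0:ℝ) • d = x := by simp
  rw [slope_def_field] at hsl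
  simp only [hx1, hx0] at hsl
  simpa [hx1] using hsl

/-- Monotonicity of G(v) = F(v) − ‖v − v*‖₂² under coordinate-wise projection to [−D,D]. -/
theorem projection_monotone {n : ℕ} (F : (Fin n → ℝ) → ℝ) (Kb D : ℝ)
    (hK : 0 < Kb) (hKD : Kb ≤ D)
    (hconc : ConcaveOn ℝ Set.univ F) (hdiff : Differentiable ℝ F)
    (hgrad : ∀ w : Fin n → ℝ, ∀ i, |fderiv ℝ F w (Pi.single i 1)| ≤ Kb)
    (vs : Fin n → ℝ) (hmax : ∀ w, F w ≤ F vs) (hvs : ∀ i, |vs i| ≤ D - Kb)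
    (v Δv : Fin n → ℝ) (hv : ∀ i, |v i| ≤ D) (hΔ : ∀ i, |Δv i| ≤ 1)
    (proj : ℝ → ℝ) (hproj : proj = fun θ => if 0 ≤ θ then min θ D else max θ (-D))
    (G : (Fin n → ℝ) → ℝ) (hG : G = fun w => F w - ∑ i, (w i - vs i) ^ 2) :
    G (fun i => proj (v i + Δv i)) ≥ G (fun i => v i + Δv i) := by
  subst hG
  set w : Fin n → ℝ := fun i => v i + Δv i with hw
  set p : Fin n → ℝ := fun i => proj (w i) with hp
  -- linearity of the derivative
  have hlin : fderiv ℝ F p (p - w) = ∑ i, (p i - w i) * fderiv ℝ F p (Pi.single i 1) := by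
    have hu : (p - w) = ∑ i, (p i - w i) • (Pi.single i (1:ℝ) : Fin n → ℝ) := by
      funext j
      simp [Finset.sum_apply, Pi.single_apply]
    rw [hu, map_sum]
    simp [smul_eq_mul]
  -- gradient bound
  have hgb : -(∑ i, Kb * |p i - w i|) ≤ fderiv ℝ F p (p - w) := by
    rw [hlin, ← Finset.sum_neg_distrib]
    refine Finset.sum_le_sum fun i _ => ?_
    have h2 : |(p i - w i) * fderiv ℝ F p (Pi.single i 1)| ≤ |p i - w i| * Kb := by
      rw [abs_mul]
      exact mul_le_mul_of_nonneg_left (hgrad p i) (abs_nonneg _)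
    nlinarith [neg_abs_le ((p i - w i) * fderiv ℝ F p (Pi.single i 1))]
  -- per-coordinate quadratic gain
  have hquad : ∀ i, 2 * (Kb * |p i - w i|) ≤ (w i - vs i) ^ 2 - (p i - vs i) ^ 2 := by
    intro i
    have hc1 : vs i ≤ D - Kb := (abs_le.mp (hvs i)).2
    have hc2 : -(D - Kb) ≤ vs i := (abs_le.mp (hvs i)).1
    have hpi : p i = if 0 ≤ w i then min (w i) D else max (w i) (-D) := by
      rw [hp, hproj]
    by_cases h0 : 0 ≤ w i
    · by_cases h1 : w i ≤ D
      · have he : p i = w i := by rw [hpi, if_pos h0, min_eq_left h1]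
        simp [he]
      · push_neg at h1
        have he : p i = D := by rw [hpi, if_pos h0, min_eq_right h1.le]
        have habs : |p i - w i| = w i - D := by
          rw [he, abs_sub_comm, abs_of_nonneg (by linarith)]
        rw [habs, he]
        nlinarith [mul_nonneg (by linarith : (0:ℝ) ≤ w i - D)
          (by linarith : (0:ℝ) ≤ w i + D - 2 * vs i - 2 * Kb)]
    · push_neg at h0
      by_cases h1 : -D ≤ w i
      · have he : p i = w i := by rw [hpi, if_neg (not_le.mpr h0), max_eq_left h1]
        simp [he]
      · push_neg at h1
        have he : p i = -D := by rw [hpi, if_neg (not_le.mpr h0), max_eq_right h1.le]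
        have habs : |p i - w i| = -D - w i := by
          rw [he, abs_of_nonneg (by linarith)]
        rw [habs, he]
        nlinarith [mul_nonneg (by linarith : (0:ℝ) ≤ -D - w i)
          (by linarith : (0:ℝ) ≤ D + 2 * vs i - w i - 2 * Kb)]
  -- assemble
  have hconcave := concave_fderiv_le hconc hdiff w p
  have hsum : ∑ i, 2 * (Kb * |p i - w i|) ≤
      (∑ i, (w i - vs i) ^ 2) - (∑ i, (p i - vs i) ^ 2) := by
    rw [← Finset.sum_sub_distrib]
    exact Finset.sum_le_sum fun i _ => hquad i
  have hKsum : (0:ℝ) ≤ ∑ i, Kb * |p i - w i| :=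
    Finset.sum_nonneg fun i _ => mul_nonneg hK.le (abs_nonneg _)
  have h2sum : ∑ i, 2 * (Kb * |p i - w i|) = 2 * ∑ i, Kb * |p i - w i| :=
    (Finset.mul_sum _ _ _).symm
  simp only [ge_iff_le]
  have : F w - F p ≤ ∑ i, Kb * |p i - w i| := by linarith
  linarith
end
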